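/- arXiv:2112.14729 — 4 statements merged into one kernel-verified Lean document; each statement's English description precedes it below -/
import Mathlib

section
/- For all n ≥ 1 and k ∈ ℕ, the circular Laguerre polynomial L_{n,k} has degree n and all of its roots lie on the unit circle {z ∈ ℂ : |z| = 1}. -/
/-- The circular Laguerre polynomial
`L_{n,k}(z) = i^k ∑_{j=0}^n (−1)^{n−j} C(n,j) (j − n/2)^k z^j`. -/
noncomputable def circLaguerre (n k : ℕ) : Polynomial ℂ :=
  ∑ j ∈ Finset.range (n + 1),
    Polynomial.C (Complex.I ^ k * (-1) ^ (n - j) * (n.choose j : ℂ) * ((j : ℂ) - n / 2) ^ k) *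
      Polynomial.X ^ j

/-!
Writing `p = L_{n,k}`, the recurrence `L_{n,k+1} = i (z p' - (n/2) p)` holds coefficientwise, and
`L_{n,0} = (z - 1)^n`. So it suffices that `z p' - (deg p / 2) p` has all its roots on the unit
circle whenever `p` does. At such a root `z` with `p(z) ≠ 0`, the logarithmic derivative gives
`∑_a (z + a)/(z - a) = 2 z p'(z)/p(z) - deg p = 0`, the sum running over the roots `a` of `p`.
For `|a| = 1` one has `Re((z + a)/(z - a)) = (|z|² - 1)/|z - a|²`, so taking real parts,
`(|z|² - 1) ∑_a |z - a|⁻² = 0`, and the sum is positive.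
-/

open Polynomial Complex

theorem Complex.re_add_div_sub (z a : ℂ) :
    ((z + a) / (z - a)).re = (‖z‖ ^ 2 - ‖a‖ ^ 2) / ‖z - a‖ ^ 2 := by
  simp only [div_re, Complex.sq_norm, normSq_apply, add_re, add_im, sub_re, sub_im]
  ring

namespace Polynomial

theorem coeff_X_mul_derivative {R : Type*} [Semiring R] (p : R[X]) (m : ℕ) :
    (X * derivative p).coeff m = p.coeff m * m := by
  cases m with
  | zero => simp
  | succ m => rw [coeff_X_mul, coeff_derivative]; push_cast; rfl

theorem sum_roots_add_div_sub_eq_zero {p : ℂ[X]} {z : ℂ} (hpz : p.eval z ≠ 0)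
    (hz : (X * derivative p - C ((p.natDegree : ℂ) / 2) * p).eval z = 0) :
    (p.roots.map fun a ↦ (z + a) / (z - a)).sum = 0 := by
  have hlog := (IsAlgClosed.splits p).eval_derivative_eq_eval_mul_sum hpz
  have hzS : z * (p.roots.map fun a ↦ 1 / (z - a)).sum = p.natDegree / 2 := by
    apply mul_left_cancel₀ hpz
    simp only [eval_sub, eval_mul, eval_X, eval_C, hlog] at hz
    linear_combination hz
  have hterm : ∀ a ∈ p.roots, (z + a) / (z - a) = 2 * (z * (1 / (z - a))) - 1 := by
    intro a ha
    have : z - a ≠ 0 := sub_ne_zero.mpr fun h ↦ hpz (h ▸ (mem_roots'.mp ha).2)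
    field_simp
    ring
  rw [Multiset.map_congr rfl hterm, Multiset.sum_map_sub, Multiset.sum_map_mul_left,
    Multiset.sum_map_mul_left, hzS, Multiset.map_const', Multiset.sum_replicate,
    IsAlgClosed.card_roots_eq_natDegree, nsmul_eq_mul]
  ring

theorem norm_eq_one_of_eval_X_mul_derivative_sub_eq_zero {p : ℂ[X]} (hp : 0 < p.natDegree)
    (hroots : ∀ a ∈ p.roots, ‖a‖ = 1) {z : ℂ}
    (hz : (X * derivative p - C ((p.natDegree : ℂ) / 2) * p).eval z = 0) : ‖z‖ = 1 := by
  by_cases hpz : p.eval z = 0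
  · exact hroots z (mem_roots'.mpr ⟨fun h ↦ by simp [h] at hp, hpz⟩)
  have hne : ∀ a ∈ p.roots, z - a ≠ 0 := fun a ha ↦
    sub_ne_zero.mpr fun h ↦ hpz (h ▸ (mem_roots'.mp ha).2)
  have hre : (‖z‖ ^ 2 - 1) * (p.roots.map fun a ↦ 1 / ‖z - a‖ ^ 2).sum = 0 := by
    have hsum := congrArg re (sum_roots_add_div_sub_eq_zero hpz hz)
    rw [← coe_reAddGroupHom, map_multiset_sum, Multiset.map_map, map_zero] at hsum
    rw [← Multiset.sum_map_mul_left, ← hsum]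
    refine congrArg Multiset.sum (Multiset.map_congr rfl fun a ha ↦ ?_)
    simp only [Function.comp_apply, coe_reAddGroupHom, re_add_div_sub, hroots a ha]
    ring
  have hpos : 0 < (p.roots.map fun a ↦ 1 / ‖z - a‖ ^ 2).sum := by
    have hroots_ne : p.roots ≠ ∅ := by
      simpa [← Multiset.card_pos, IsAlgClosed.card_roots_eq_natDegree] using hp
    simpa using Multiset.sum_lt_sum_of_nonempty (f := fun _ ↦ (0 : ℝ)) hroots_ne
      fun a ha ↦ by have := hne a ha; positivity
  have hsq : ‖z‖ ^ 2 = 1 := by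
    simpa [sub_eq_zero] using (mul_eq_zero.mp hre).resolve_right hpos.ne'
  exact (pow_eq_one_iff_of_nonneg (norm_nonneg z) two_ne_zero).mp hsq

end Polynomial

theorem circLaguerre_coeff (n k m : ℕ) :
    (circLaguerre n k).coeff m =
      if m ≤ n then I ^ k * (-1) ^ (n - m) * (n.choose m : ℂ) * ((m : ℂ) - n / 2) ^ k else 0 := by
  simp only [circLaguerre, finsetSum_coeff, coeff_C_mul, coeff_X_pow, mul_ite, mul_one, mul_zero,
    Finset.sum_ite_eq, Finset.mem_range, Nat.lt_succ_iff]

theorem circLaguerre_natDegree {n : ℕ} (hn : 0 < n) (k : ℕ) : (circLaguerre n k).natDegree = n := by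
  refine natDegree_eq_of_le_of_coeff_ne_zero ?_ ?_
  · exact natDegree_le_iff_coeff_eq_zero.mpr fun m hm ↦ by
      rw [circLaguerre_coeff, if_neg (not_le.mpr (by exact_mod_cast hm))]
  · have : (n : ℂ) - n / 2 ≠ 0 := by
      rw [sub_half, div_ne_zero_iff]
      exact ⟨Nat.cast_ne_zero.mpr hn.ne', two_ne_zero⟩
    simp [circLaguerre_coeff, this]

theorem circLaguerre_zero (n : ℕ) : circLaguerre n 0 = (X - 1) ^ n := by
  rw [sub_eq_add_neg, add_pow, circLaguerre]
  refine Finset.sum_congr rfl fun j _ ↦ ?_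
  simp only [pow_zero, one_mul, mul_one, C_mul, C_pow, C_neg, C_1, map_natCast]
  ring

theorem circLaguerre_succ (n k : ℕ) :
    circLaguerre n (k + 1) =
      C I * (X * derivative (circLaguerre n k) - C ((n : ℂ) / 2) * circLaguerre n k) := by
  ext m
  simp only [coeff_C_mul, coeff_sub, coeff_X_mul_derivative, circLaguerre_coeff]
  split_ifs <;> ring

theorem norm_eq_one_of_eval_circLaguerre_eq_zero {n : ℕ} (hn : 0 < n) (k : ℕ) {z : ℂ}
    (hz : (circLaguerre n k).eval z = 0) : ‖z‖ = 1 := by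
  induction k generalizing z with
  | zero =>
    rw [circLaguerre_zero, eval_pow, eval_sub, eval_X, eval_one, pow_eq_zero_iff hn.ne',
      sub_eq_zero] at hz
    simp [hz]
  | succ k ih =>
    rw [circLaguerre_succ, eval_mul, eval_C, mul_eq_zero, or_iff_right I_ne_zero] at hz
    have hdeg := circLaguerre_natDegree hn k
    exact norm_eq_one_of_eval_X_mul_derivative_sub_eq_zero (hdeg.symm ▸ hn)
      (fun a ha ↦ ih (mem_roots'.mp ha).2) (by rwa [hdeg])

theorem stmt4 (n k : ℕ) (hn : 1 ≤ n) :
    (circLaguerre n k).natDegree = n ∧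
    ∀ z : ℂ, (circLaguerre n k).eval z = 0 → ‖z‖ = 1 :=
  ⟨circLaguerre_natDegree hn k, fun _ ↦ norm_eq_one_of_eval_circLaguerre_eq_zero hn k⟩
end

section
/- Fix t > 0. For every τ > 0 the equation y − t·tanh y = τ has a unique solution y = y_t(τ) in (0, ∞); this solution satisfies y_t(τ) > τ and is simple, i.e. 1 − t/cosh²(y_t(τ)) > 0. Moreover y_t(τ) − τ → t as τ → +∞. Finally, if 0 < t ≤ 1 then y_t(τ) → 0 as τ → 0⁺, while if t > 1 then y_t(τ) → y₀ as τ → 0⁺, where y₀ is the unique strictly positive solution of y = t·tanh y. -/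
/-!
Write `F y = y - t tanh y`, so `F' y = 1 - t / cosh² y`. Let `y₁ ≥ 0` be given by
`cosh² y₁ = max t 1`. Then `F` decreases on `[0, y₁]` and increases on `[y₁, ∞)`, and
`F 0 = 0`; hence every positive solution of `F y = τ ≥ 0` lies beyond `y₁`, where `F` is a
strictly increasing bijection onto `[F y₁, ∞)` with `F' > 0`. The solution `y_t(τ)` is the
inverse of that branch, so as `τ → 0⁺` it tends to the root of `F` in `[y₁, ∞)` (`0` if
`t ≤ 1`, `y₀` if `t > 1`), and `y_t(τ) - τ = t tanh y_t(τ) → t` as `τ → ∞`.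
-/

open Real Set Filter Topology

namespace Real

theorem hasDerivAt_tanh (x : ℝ) : HasDerivAt tanh (1 / cosh x ^ 2) x := by
  have hquot := (hasDerivAt_sinh x).div (hasDerivAt_cosh x) (cosh_pos x).ne'
  rw [show tanh = fun y => sinh y / cosh y from funext tanh_eq_sinh_div_cosh]
  refine hquot.congr_deriv ?_
  rw [← cosh_sq_sub_sinh_sq x]
  ring

theorem continuous_tanh : Continuous tanh :=
  continuous_iff_continuousAt.2 fun x => (hasDerivAt_tanh x).continuousAt

theorem tanh_pos {x : ℝ} (hx : 0 < x) : 0 < tanh x := by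
  rw [tanh_eq_sinh_div_cosh]
  exact div_pos (sinh_pos_iff.2 hx) (cosh_pos x)

theorem tanh_eq_one_sub_exp_div_one_add_exp (x : ℝ) :
    tanh x = (1 - exp (-(2 * x))) / (1 + exp (-(2 * x))) := by
  have hexp : exp (-(2 * x)) = exp (-x) / exp x := by
    rw [← exp_sub]; ring_nf
  rw [tanh_eq, hexp]
  field_simp

theorem tendsto_tanh_atTop : Tendsto tanh atTop (𝓝 1) := by
  have hexp : Tendsto (fun x : ℝ => exp (-(2 * x))) atTop (𝓝 0) :=
    tendsto_exp_neg_atTop_nhds_zero.comp (tendsto_id.const_mul_atTop two_pos)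
  have hquot : Tendsto (fun x => (1 - exp (-(2 * x))) / (1 + exp (-(2 * x)))) atTop
      (𝓝 ((1 - 0) / (1 + 0))) :=
    (tendsto_const_nhds.sub hexp).div (tendsto_const_nhds.add hexp) (by norm_num)
  rw [funext tanh_eq_one_sub_exp_div_one_add_exp]
  simpa using hquot

end Real

theorem StrictMonoOn.tendsto_nhdsGT_of_rightInv {α β : Type*}
    [LinearOrder α] [TopologicalSpace α] [OrderTopology α]
    [LinearOrder β] [TopologicalSpace β] [OrderTopology β]
    {f : α → β} {g : β → α} {a L : α} {c : β} (hf : StrictMonoOn f (Ici a))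
    (haL : a ≤ L) (hfL : f L = c) (hg : ∀ τ, c < τ → a ≤ g τ ∧ f (g τ) = τ) :
    Tendsto g (𝓝[>] c) (𝓝 L) := by
  subst hfL
  rw [tendsto_order]
  constructor
  · intro b hbL
    filter_upwards [self_mem_nhdsWithin] with τ (hτ : f L < τ)
    obtain ⟨hga, hfg⟩ := hg τ hτ
    have hLg : L < g τ := (hf.lt_iff_lt haL hga).1 (by rwa [hfg])
    exact hbL.trans hLg
  · intro b hLb
    have hab : a ≤ b := haL.trans hLb.le
    filter_upwards [Ioo_mem_nhdsGT (hf haL hab hLb)] with τ hτ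
    obtain ⟨hga, hfg⟩ := hg τ hτ.1
    exact (hf.lt_iff_lt hga hab).1 (by rw [hfg]; exact hτ.2)

noncomputable def idSubTanh (t y : ℝ) : ℝ := y - t * tanh y

noncomputable def critPoint (t : ℝ) : ℝ := arcosh √(max t 1)

section idSubTanh

variable {t : ℝ}

theorem critPoint_nonneg : 0 ≤ critPoint t :=
  arcosh_nonneg (one_le_sqrt.2 (le_max_right t 1))

theorem cosh_critPoint_sq : cosh (critPoint t) ^ 2 = max t 1 := by
  rw [critPoint, cosh_arcosh (one_le_sqrt.2 (le_max_right t 1)),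
    sq_sqrt (zero_le_one.trans (le_max_right t 1))]

theorem critPoint_eq_zero (ht : t ≤ 1) : critPoint t = 0 := by
  rw [critPoint, max_eq_right ht, sqrt_one, arcosh_zero]

theorem critPoint_pos (ht : 1 < t) : 0 < critPoint t :=
  arcosh_pos (by rw [max_eq_left ht.le]; exact (lt_sqrt zero_le_one).2 (by simpa using ht))

theorem cosh_sq_lt_cosh_sq {x y : ℝ} (hx : 0 ≤ x) (hxy : x < y) : cosh x ^ 2 < cosh y ^ 2 :=
  pow_lt_pow_left₀ (cosh_strictMonoOn hx (hx.trans hxy.le) hxy) (cosh_pos x).le two_ne_zero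

theorem lt_cosh_sq_of_critPoint_lt {y : ℝ} (hy : critPoint t < y) : t < cosh y ^ 2 :=
  calc t ≤ max t 1 := le_max_left t 1
    _ = cosh (critPoint t) ^ 2 := cosh_critPoint_sq.symm
    _ < cosh y ^ 2 := cosh_sq_lt_cosh_sq critPoint_nonneg hy

theorem cosh_sq_lt_of_lt_critPoint {y : ℝ} (hy : 0 ≤ y) (hyc : y < critPoint t) :
    cosh y ^ 2 < t := by
  have hlt : cosh y ^ 2 < max t 1 := cosh_critPoint_sq (t := t) ▸ cosh_sq_lt_cosh_sq hy hyc
  have hone : 1 ≤ cosh y ^ 2 := one_le_pow₀ (one_le_cosh y)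
  exact (lt_max_iff.1 hlt).resolve_right hone.not_gt

theorem hasDerivAt_idSubTanh (y : ℝ) :
    HasDerivAt (idSubTanh t) (1 - t / cosh y ^ 2) y := by
  have h := (hasDerivAt_id' y).sub ((hasDerivAt_tanh y).const_mul t)
  rwa [mul_one_div] at h

theorem continuous_idSubTanh : Continuous (idSubTanh t) :=
  continuous_id.sub (continuous_const.mul continuous_tanh)

theorem one_sub_div_cosh_sq_pos {y : ℝ} (hy : critPoint t < y) : 0 < 1 - t / cosh y ^ 2 :=
  sub_pos.2 ((div_lt_one (by positivity)).2 (lt_cosh_sq_of_critPoint_lt hy))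

theorem strictMonoOn_idSubTanh : StrictMonoOn (idSubTanh t) (Ici (critPoint t)) := by
  refine strictMonoOn_of_deriv_pos (convex_Ici _) continuous_idSubTanh.continuousOn ?_
  intro y hy
  rw [interior_Ici] at hy
  rw [(hasDerivAt_idSubTanh y).deriv]
  exact one_sub_div_cosh_sq_pos hy

theorem strictAntiOn_idSubTanh : StrictAntiOn (idSubTanh t) (Icc 0 (critPoint t)) := by
  refine strictAntiOn_of_deriv_neg (convex_Icc _ _) continuous_idSubTanh.continuousOn ?_
  intro y hy
  rw [interior_Icc] at hy
  rw [(hasDerivAt_idSubTanh y).deriv, sub_neg, one_lt_div (by positivity)]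
  exact cosh_sq_lt_of_lt_critPoint hy.1.le hy.2

theorem idSubTanh_zero : idSubTanh t 0 = 0 := by
  simp [idSubTanh]

theorem idSubTanh_neg {y : ℝ} (hy : 0 < y) (hyc : y ≤ critPoint t) : idSubTanh t y < 0 :=
  idSubTanh_zero (t := t) ▸
    strictAntiOn_idSubTanh ⟨le_rfl, critPoint_nonneg⟩ ⟨hy.le, hyc⟩ hy

theorem idSubTanh_critPoint_nonpos : idSubTanh t (critPoint t) ≤ 0 :=
  idSubTanh_zero (t := t) ▸ strictAntiOn_idSubTanh.antitoneOn
    ⟨le_rfl, critPoint_nonneg⟩ ⟨critPoint_nonneg, le_rfl⟩ critPoint_nonneg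

theorem critPoint_lt_of_idSubTanh_nonneg {y : ℝ} (hy : 0 < y) (hfy : 0 ≤ idSubTanh t y) :
    critPoint t < y :=
  lt_of_not_ge fun hyc => (idSubTanh_neg hy hyc).not_ge hfy

theorem eq_of_idSubTanh_eq {y y' : ℝ} (hy : 0 < y) (hy' : 0 < y') (hfy : 0 ≤ idSubTanh t y)
    (h : idSubTanh t y = idSubTanh t y') : y = y' :=
  strictMonoOn_idSubTanh.injOn (critPoint_lt_of_idSubTanh_nonneg hy hfy).le
    (critPoint_lt_of_idSubTanh_nonneg hy' (h ▸ hfy)).le h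

theorem idSubTanh_lt_self (ht : 0 < t) {y : ℝ} (hy : 0 < y) : idSubTanh t y < y :=
  sub_lt_self y (mul_pos ht (tanh_pos hy))

theorem exists_idSubTanh_eq (ht : 0 ≤ t) {τ : ℝ} (hτ : idSubTanh t (critPoint t) < τ) :
    ∃ y, critPoint t < y ∧ idSubTanh t y = τ := by
  set b := critPoint t + t + |τ| + 1
  have hcb : critPoint t < b := by linarith [abs_nonneg τ]
  have hτb : τ < idSubTanh t b := by
    have : t * tanh b ≤ t := mul_le_of_le_one_right ht (tanh_lt_one b).le
    rw [idSubTanh]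
    linarith [le_abs_self τ, critPoint_nonneg (t := t)]
  obtain ⟨y, hy, hfy⟩ :=
    intermediate_value_Ioo hcb.le continuous_idSubTanh.continuousOn ⟨hτ, hτb⟩
  exact ⟨y, hy.1, hfy⟩

theorem tendsto_sub_self_of_idSubTanh_eq (ht : 0 < t) {Y : ℝ → ℝ}
    (hY : ∀ τ, 0 < τ → 0 < Y τ ∧ idSubTanh t (Y τ) = τ) :
    Tendsto (fun τ => Y τ - τ) atTop (𝓝 t) := by
  have hYτ : ∀ᶠ τ in atTop, t * tanh (Y τ) = Y τ - τ := by
    filter_upwards [eventually_gt_atTop 0] with τ hτ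
    have hfY : idSubTanh t (Y τ) = τ := (hY τ hτ).2
    rw [idSubTanh] at hfY
    linarith
  have hY_top : Tendsto Y atTop atTop := by
    refine tendsto_atTop_mono' atTop ?_ tendsto_id
    filter_upwards [eventually_gt_atTop 0] with τ hτ
    exact ((hY τ hτ).2 ▸ idSubTanh_lt_self ht (hY τ hτ).1).le
  simpa using ((tendsto_tanh_atTop.comp hY_top).const_mul t).congr' hYτ

end idSubTanh

theorem stmt12 (t : ℝ) (ht : 0 < t) :
    ∃ y : ℝ → ℝ,
      (∀ τ : ℝ, 0 < τ →
        τ < y τ ∧ y τ - t * Real.tanh (y τ) = τ ∧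
        (∀ y' : ℝ, 0 < y' → y' - t * Real.tanh y' = τ → y' = y τ) ∧
        0 < 1 - t / (Real.cosh (y τ)) ^ 2) ∧
      Filter.Tendsto (fun τ => y τ - τ) Filter.atTop (nhds t) ∧
      (t ≤ 1 → Filter.Tendsto y (nhdsWithin 0 (Set.Ioi 0)) (nhds 0)) ∧
      (1 < t → ∃ y₀ : ℝ, 0 < y₀ ∧ y₀ = t * Real.tanh y₀ ∧
        (∀ y' : ℝ, 0 < y' → y' = t * Real.tanh y' → y' = y₀) ∧
        Filter.Tendsto y (nhdsWithin 0 (Set.Ioi 0)) (nhds y₀)) := by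
  choose! Y hY_gt hY_eq using fun τ (hτ : 0 < τ) =>
    exists_idSubTanh_eq ht.le (idSubTanh_critPoint_nonpos.trans_lt hτ)
  have hY_pos : ∀ τ, 0 < τ → 0 < Y τ :=
    fun τ hτ => critPoint_nonneg.trans_lt (hY_gt τ hτ)
  have hY_lim : ∀ L, critPoint t ≤ L → idSubTanh t L = 0 → Tendsto Y (𝓝[>] 0) (𝓝 L) :=
    fun L hL hL0 => strictMonoOn_idSubTanh.tendsto_nhdsGT_of_rightInv hL hL0
      fun τ hτ => ⟨(hY_gt τ hτ).le, hY_eq τ hτ⟩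
  refine ⟨Y, fun τ hτ => ⟨?_, hY_eq τ hτ, ?_, one_sub_div_cosh_sq_pos (hY_gt τ hτ)⟩,
    tendsto_sub_self_of_idSubTanh_eq ht fun τ hτ => ⟨hY_pos τ hτ, hY_eq τ hτ⟩,
    fun ht1 => hY_lim 0 (critPoint_eq_zero ht1).le idSubTanh_zero, fun ht1 => ?_⟩
  · exact (hY_eq τ hτ).symm.trans_lt (idSubTanh_lt_self ht (hY_pos τ hτ))
  · intro y' hy' (hfy' : idSubTanh t y' = τ)
    exact eq_of_idSubTanh_eq hy' (hY_pos τ hτ) (hfy'.symm ▸ hτ.le)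
      (hfy'.trans (hY_eq τ hτ).symm)
  obtain ⟨y₀, hy₀c, hfy₀⟩ :=
    exists_idSubTanh_eq ht.le (idSubTanh_neg (critPoint_pos ht1) le_rfl)
  have hy₀ : 0 < y₀ := critPoint_nonneg.trans_lt hy₀c
  refine ⟨y₀, hy₀, sub_eq_zero.1 hfy₀, fun y' hy' hfy' => ?_,
    hY_lim y₀ hy₀c.le hfy₀⟩
  have hfy'0 : idSubTanh t y' = 0 := sub_eq_zero.2 hfy'
  exact eq_of_idSubTanh_eq hy' hy₀ hfy'0.ge (hfy'0.trans hfy₀.symm)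
end

section
/- Fix t > 0. For θ ∈ ℍ let f_θ(x) = θ + t·tan x and let ζ_t(θ) denote the unique ζ ∈ ℍ with ζ − t·tan ζ = θ. Then the sequence of functions g_n : ℍ → ℂ defined by g_n(θ) = f_θ^{∘n}(θ) (the n-fold iterate of f_θ applied to the starting point θ itself) converges to ζ_t locally uniformly on ℍ as n → ∞. In particular ζ_t(θ) = θ + t·tan(θ + t·tan(θ + t·tan(θ + …))) for all θ ∈ ℍ. -/
/-!
Write `f_θ z = g_θ z + (Im θ) i` with `g_θ z = Re θ + t tan z`. Since `tan` maps `ℍ` into itself,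
`g_θ` is a holomorphic self-map of `ℍ`, so by Schwarz–Pick it does not increase the
pseudo-hyperbolic distance `ρ(z, w) = |z - w| / |z - w̄|`. The vertical shift by `Im θ` then
enlarges the denominator `|z - w̄|` by a definite factor, so `f_θ` contracts `ρ` by some `k < 1`
along the orbit of `θ`; `k` depends only on a lower bound for `Im θ` and an upper bound for
`|z - w̄|`, and the latter holds on all orbits because `tan` is bounded on `{Im z ≥ m}`. Hence
`ρ(f_θ^n θ, ζ_t θ) ≤ kⁿ` and `|f_θ^n θ - ζ_t θ| ≤ C kⁿ`, uniformly on horizontal strips.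
-/

open Complex ComplexConjugate Set Metric Filter Topology

local notation "ℍₒ" => UpperHalfPlane.upperHalfPlaneSet

namespace Complex

lemma sin_re (z : ℂ) : (sin z).re = Real.sin z.re * Real.cosh z.im := by
  rw [sin_eq]; simp [sin_ofReal_re, cos_ofReal_re, sinh_ofReal_re, cosh_ofReal_re]

lemma sin_im (z : ℂ) : (sin z).im = Real.cos z.re * Real.sinh z.im := by
  rw [sin_eq]; simp [sin_ofReal_re, cos_ofReal_re, sinh_ofReal_re, cosh_ofReal_re]

lemma cos_re (z : ℂ) : (cos z).re = Real.cos z.re * Real.cosh z.im := by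
  rw [cos_eq]; simp [sin_ofReal_re, cos_ofReal_re, sinh_ofReal_re, cosh_ofReal_re]

lemma cos_im (z : ℂ) : (cos z).im = -(Real.sin z.re * Real.sinh z.im) := by
  rw [cos_eq]; simp [sin_ofReal_re, cos_ofReal_re, sinh_ofReal_re, cosh_ofReal_re]

lemma normSq_sin (z : ℂ) : normSq (sin z) = Real.sin z.re ^ 2 + Real.sinh z.im ^ 2 := by
  rw [normSq_apply, sin_re, sin_im]
  nlinarith [Real.sin_sq_add_cos_sq z.re, Real.cosh_sq z.im]

lemma normSq_cos (z : ℂ) : normSq (cos z) = Real.cos z.re ^ 2 + Real.sinh z.im ^ 2 := by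
  rw [normSq_apply, cos_re, cos_im]
  nlinarith [Real.sin_sq_add_cos_sq z.re, Real.cosh_sq z.im]

lemma tan_im (z : ℂ) : (tan z).im = Real.sinh z.im * Real.cosh z.im / normSq (cos z) := by
  rw [tan_eq_sin_div_cos, div_im, div_sub_div_same, sin_re, sin_im, cos_re, cos_im]
  congr 1
  linear_combination (Real.sinh z.im * Real.cosh z.im) * Real.sin_sq_add_cos_sq z.re

lemma sinh_im_sq_le_normSq_cos (z : ℂ) : Real.sinh z.im ^ 2 ≤ normSq (cos z) := by
  rw [normSq_cos]
  nlinarith [sq_nonneg (Real.cos z.re)]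

lemma cos_ne_zero_of_im_pos {z : ℂ} (hz : 0 < z.im) : cos z ≠ 0 := by
  rw [← normSq_pos]
  exact (pow_pos (Real.sinh_pos_iff.2 hz) 2).trans_le (sinh_im_sq_le_normSq_cos z)

lemma tan_im_pos {z : ℂ} (hz : 0 < z.im) : 0 < (tan z).im := by
  rw [tan_im]
  have := normSq_pos.2 (cos_ne_zero_of_im_pos hz)
  have := Real.sinh_pos_iff.2 hz
  have := Real.cosh_pos z.im
  positivity

lemma differentiableOn_tan_upperHalfPlaneSet : DifferentiableOn ℂ tan ℍₒ :=
  fun _ hz => (differentiableAt_tan.2 (cos_ne_zero_of_im_pos hz)).differentiableWithinAt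

lemma norm_sin_le_cosh_im (z : ℂ) : ‖sin z‖ ≤ Real.cosh z.im := by
  rw [← sq_le_sq₀ (norm_nonneg _) (Real.cosh_pos _).le, Complex.sq_norm, normSq_sin,
    Real.cosh_sq]
  nlinarith [Real.sin_sq_le_one z.re]

lemma sinh_im_le_norm_cos (z : ℂ) : Real.sinh z.im ≤ ‖cos z‖ :=
  le_of_sq_le_sq (by rw [Complex.sq_norm]; exact sinh_im_sq_le_normSq_cos z) (norm_nonneg _)

lemma norm_tan_le {z : ℂ} {m : ℝ} (hm : 0 < m) (hz : m ≤ z.im) :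
    ‖tan z‖ ≤ Real.cosh m / Real.sinh m := by
  have hsinh : 0 < Real.sinh z.im := Real.sinh_pos_iff.2 (hm.trans_le hz)
  calc ‖tan z‖ = ‖sin z‖ / ‖cos z‖ := by rw [tan_eq_sin_div_cos, norm_div]
    _ ≤ Real.cosh z.im / Real.sinh z.im :=
      div_le_div₀ (Real.cosh_pos _).le (norm_sin_le_cosh_im z) hsinh (sinh_im_le_norm_cos z)
    _ ≤ Real.cosh m / Real.sinh m := by
      rw [div_le_div_iff₀ hsinh (Real.sinh_pos_iff.2 hm)]
      have := Real.sinh_nonneg_iff.2 (sub_nonneg.2 hz)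
      rw [Real.sinh_sub] at this
      linarith

end Complex

lemma sub_conj_ne_zero {z w : ℂ} (hz : 0 < z.im) (hw : 0 < w.im) : z - conj w ≠ 0 := by
  intro h
  have := congrArg im h
  simp only [sub_im, conj_im, zero_im] at this
  linarith

lemma norm_sub_lt_norm_sub_conj {z w : ℂ} (hz : 0 < z.im) (hw : 0 < w.im) :
    ‖z - w‖ < ‖z - conj w‖ := by
  rw [← sq_lt_sq₀ (norm_nonneg _) (norm_nonneg _), Complex.sq_norm, Complex.sq_norm,
    normSq_apply, normSq_apply]
  simp only [sub_re, sub_im, conj_re, conj_im]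
  nlinarith [mul_pos hz hw]

lemma norm_sub_conj_le {x y θ : ℂ} {r : ℝ} (hx : ‖x - θ‖ ≤ r) (hy : ‖y - θ‖ ≤ r) :
    ‖x - conj y‖ ≤ 2 * |θ.im| + 2 * r := by
  have hθ : ‖θ - conj θ‖ = 2 * |θ.im| := by
    rw [sub_conj, norm_mul, norm_I, mul_one, norm_real, Real.norm_eq_abs, abs_mul, abs_two]
  calc ‖x - conj y‖ = ‖(x - θ) + (θ - conj θ) - conj (y - θ)‖ := by rw [map_sub]; ring_nf
    _ ≤ ‖x - θ‖ + ‖θ - conj θ‖ + ‖conj (y - θ)‖ := norm_sub_le_of_le (norm_add_le _ _) le_rfl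
    _ ≤ 2 * |θ.im| + 2 * r := by rw [RCLike.norm_conj, hθ]; linarith

lemma one_sub_ne_zero_of_mem_ball {u : ℂ} (hu : u ∈ ball (0 : ℂ) 1) : 1 - u ≠ 0 := by
  intro h
  rw [mem_ball_zero_iff, ← sub_eq_zero.1 h, norm_one] at hu
  exact lt_irrefl _ hu

/-- `‖halfPlaneToDisc a z‖` is the pseudo-hyperbolic distance between `z` and `a`. -/
noncomputable def halfPlaneToDisc (a z : ℂ) : ℂ := (z - a) / (z - conj a)

noncomputable def discToHalfPlane (a u : ℂ) : ℂ := (a - conj a * u) / (1 - u)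

section Moebius

variable {a z : ℂ}

lemma halfPlaneToDisc_self (a : ℂ) : halfPlaneToDisc a a = 0 := by
  simp [halfPlaneToDisc]

lemma norm_halfPlaneToDisc (a z : ℂ) : ‖halfPlaneToDisc a z‖ = ‖z - a‖ / ‖z - conj a‖ :=
  norm_div _ _

lemma norm_halfPlaneToDisc_lt_one (ha : 0 < a.im) (hz : 0 < z.im) :
    ‖halfPlaneToDisc a z‖ < 1 := by
  rw [norm_halfPlaneToDisc, div_lt_one (norm_pos_iff.2 (sub_conj_ne_zero hz ha))]
  exact norm_sub_lt_norm_sub_conj hz ha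

lemma mapsTo_halfPlaneToDisc (ha : 0 < a.im) : MapsTo (halfPlaneToDisc a) ℍₒ (ball 0 1) :=
  fun _ hz => mem_ball_zero_iff.2 (norm_halfPlaneToDisc_lt_one ha hz)

lemma differentiableOn_halfPlaneToDisc (ha : 0 < a.im) :
    DifferentiableOn ℂ (halfPlaneToDisc a) ℍₒ :=
  fun _ hz => ((differentiableAt_id.sub_const a).div (differentiableAt_id.sub_const _)
    (sub_conj_ne_zero hz ha)).differentiableWithinAt

lemma discToHalfPlane_zero (a : ℂ) : discToHalfPlane a 0 = a := by
  simp [discToHalfPlane]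

lemma im_discToHalfPlane (a u : ℂ) :
    (discToHalfPlane a u).im = a.im * (1 - normSq u) / normSq (1 - u) := by
  rw [discToHalfPlane, div_im, div_sub_div_same]
  congr 1
  simp only [sub_re, sub_im, mul_re, mul_im, conj_re, conj_im, one_re, one_im, normSq_apply]
  ring

lemma mapsTo_discToHalfPlane (ha : 0 < a.im) : MapsTo (discToHalfPlane a) (ball 0 1) ℍₒ := by
  intro u hu
  have hu1 : normSq u < 1 := by
    rw [← Complex.sq_norm]
    exact pow_lt_one₀ (norm_nonneg u) (mem_ball_zero_iff.1 hu) two_ne_zero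
  have hden := normSq_pos.2 (one_sub_ne_zero_of_mem_ball hu)
  show 0 < (discToHalfPlane a u).im
  rw [im_discToHalfPlane]
  exact div_pos (mul_pos ha (sub_pos.2 hu1)) hden

lemma differentiableOn_discToHalfPlane (a : ℂ) :
    DifferentiableOn ℂ (discToHalfPlane a) (ball 0 1) :=
  fun u hu => (by fun_prop : DifferentiableAt ℂ (fun u => a - conj a * u) u)
    |>.differentiableWithinAt.div (by fun_prop) (one_sub_ne_zero_of_mem_ball hu)

lemma discToHalfPlane_halfPlaneToDisc (ha : 0 < a.im) (hz : 0 < z.im) :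
    discToHalfPlane a (halfPlaneToDisc a z) = z := by
  have hz' := sub_conj_ne_zero hz ha
  have ha' := sub_conj_ne_zero ha ha
  rw [discToHalfPlane, halfPlaneToDisc, div_eq_iff]
  · field_simp
    ring
  · rw [one_sub_div hz']
    exact div_ne_zero (by simpa using ha') hz'

end Moebius

/-- The Schwarz–Pick lemma on the upper half-plane. -/
theorem norm_halfPlaneToDisc_le {f : ℂ → ℂ} (hd : DifferentiableOn ℂ f ℍₒ)
    (hf : MapsTo f ℍₒ ℍₒ) {z w : ℂ} (hz : 0 < z.im) (hw : 0 < w.im) :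
    ‖halfPlaneToDisc (f w) (f z)‖ ≤ ‖halfPlaneToDisc w z‖ := by
  set g := halfPlaneToDisc (f w) ∘ f ∘ discToHalfPlane w
  have hg : DifferentiableOn ℂ g (ball 0 1) :=
    (differentiableOn_halfPlaneToDisc (hf hw)).comp
      (hd.comp (differentiableOn_discToHalfPlane w) (mapsTo_discToHalfPlane hw))
      (hf.comp (mapsTo_discToHalfPlane hw))
  have hg_maps : MapsTo g (ball 0 1) (ball 0 1) :=
    (mapsTo_halfPlaneToDisc (hf hw)).comp (hf.comp (mapsTo_discToHalfPlane hw))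
  have hg0 : g 0 = 0 := by
    simp only [g, Function.comp_apply, discToHalfPlane_zero, halfPlaneToDisc_self]
  have := Complex.norm_le_norm_of_mapsTo_ball hg (hg_maps.mono_right ball_subset_closedBall) hg0
    (norm_halfPlaneToDisc_lt_one hw hz)
  simpa only [g, Function.comp_apply, discToHalfPlane_halfPlaneToDisc hw hz] using this

lemma norm_sub_conj_sub_le {z w : ℂ} {c m B : ℝ} (hm : 0 ≤ m) (hmc : m ≤ c) (hz : c ≤ z.im)
    (hw : c ≤ w.im) (hB : ‖z - conj w‖ ≤ B) :
    ‖z - conj w - 2 * c * I‖ ≤ √(1 - (2 * m / B) ^ 2) * ‖z - conj w‖ := by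
  set N := ‖z - conj w‖
  have hsq : ‖z - conj w - 2 * c * I‖ ^ 2 = N ^ 2 - 4 * c * (z.im + w.im - c) := by
    simp only [N, Complex.sq_norm, normSq_apply, sub_re, sub_im, conj_re, conj_im, mul_re,
      mul_im, I_re, I_im, ofReal_re, ofReal_im, re_ofNat, im_ofNat]
    ring
  have hratio : (N / B) ^ 2 ≤ 1 :=
    pow_le_one₀ (div_nonneg (norm_nonneg _) ((norm_nonneg _).trans hB))
      (div_le_one_of_le₀ hB ((norm_nonneg _).trans hB))
  have hgain : (2 * m / B) ^ 2 * N ^ 2 ≤ 4 * c * (z.im + w.im - c) := by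
    calc (2 * m / B) ^ 2 * N ^ 2 = (2 * m) ^ 2 * (N / B) ^ 2 := by ring
      _ ≤ (2 * m) ^ 2 := mul_le_of_le_one_right (sq_nonneg _) hratio
      _ ≤ 4 * c * (z.im + w.im - c) := by nlinarith
  calc ‖z - conj w - 2 * c * I‖ = √(‖z - conj w - 2 * c * I‖ ^ 2) :=
        (Real.sqrt_sq (norm_nonneg _)).symm
    _ ≤ √((1 - (2 * m / B) ^ 2) * N ^ 2) := Real.sqrt_le_sqrt (by rw [hsq]; linarith)
    _ = √(1 - (2 * m / B) ^ 2) * N := by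
        rw [Real.sqrt_mul' _ (sq_nonneg N), Real.sqrt_sq (norm_nonneg _)]

/-- Shifting a self-map of `ℍ` up by `c` moves `f z` away from `conj (f w)`, which improves the
Schwarz–Pick bound by a factor depending only on `m ≤ c` and on the bound `B`. -/
theorem norm_halfPlaneToDisc_add_mul_I_le {f : ℂ → ℂ} (hd : DifferentiableOn ℂ f ℍₒ)
    (hf : MapsTo f ℍₒ ℍₒ) {c m B : ℝ} (hm : 0 ≤ m) (hmc : m ≤ c) {z w : ℂ} (hz : 0 < z.im)
    (hw : 0 < w.im) (hB : ‖f z + c * I - conj (f w + c * I)‖ ≤ B) :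
    ‖halfPlaneToDisc (f w + c * I) (f z + c * I)‖ ≤
      √(1 - (2 * m / B) ^ 2) * ‖halfPlaneToDisc w z‖ := by
  have hfz : 0 < (f z).im := hf hz
  have hfw : 0 < (f w).im := hf hw
  have hgain := norm_sub_conj_sub_le (z := f z + c * I) (w := f w + c * I) hm hmc
    (by simp only [add_im, mul_im, ofReal_re, ofReal_im, I_re, I_im]; linarith)
    (by simp only [add_im, mul_im, ofReal_re, ofReal_im, I_re, I_im]; linarith) hB
  have hshift : f z + c * I - conj (f w + c * I) - 2 * c * I = f z - conj (f w) := by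
    simp only [map_add, map_mul, conj_ofReal, conj_I]
    ring
  rw [hshift] at hgain
  have hden : 0 < ‖f z - conj (f w)‖ := norm_pos_iff.2 (sub_conj_ne_zero hfz hfw)
  calc ‖halfPlaneToDisc (f w + c * I) (f z + c * I)‖
      = ‖halfPlaneToDisc (f w) (f z)‖ *
          (‖f z - conj (f w)‖ / ‖f z + c * I - conj (f w + c * I)‖) := by
        rw [norm_halfPlaneToDisc, norm_halfPlaneToDisc, add_sub_add_right_eq_sub]
        field_simp
    _ ≤ ‖halfPlaneToDisc w z‖ * √(1 - (2 * m / B) ^ 2) := by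
        gcongr
        · exact norm_halfPlaneToDisc_le hd hf hz hw
        · exact div_le_of_le_mul₀ (norm_nonneg _) (Real.sqrt_nonneg _) hgain
    _ = √(1 - (2 * m / B) ^ 2) * ‖halfPlaneToDisc w z‖ := mul_comm _ _

noncomputable def tanMap (t : ℝ) (θ z : ℂ) : ℂ := θ + t * tan z

section tanMap

variable {t m : ℝ} {θ z w : ℂ}

lemma im_tanMap : (tanMap t θ z).im = θ.im + t * (tan z).im := by
  simp [tanMap]

lemma im_le_im_tanMap (ht : 0 ≤ t) (hz : 0 < z.im) : θ.im ≤ (tanMap t θ z).im := by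
  rw [im_tanMap]
  nlinarith [tan_im_pos hz]

lemma norm_tanMap_sub_le (ht : 0 ≤ t) (hm : 0 < m) (hz : m ≤ z.im) :
    ‖tanMap t θ z - θ‖ ≤ t * (Real.cosh m / Real.sinh m) := by
  rw [tanMap, add_sub_cancel_left, norm_mul, norm_real, Real.norm_of_nonneg ht]
  exact mul_le_mul_of_nonneg_left (norm_tan_le hm hz) ht

lemma tanMap_eq_add_mul_I (t : ℝ) (θ z : ℂ) :
    tanMap t θ z = (θ.re + t * tan z) + θ.im * I := by
  conv_lhs => rw [tanMap, ← re_add_im θ]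
  ring

lemma mapsTo_ofReal_add_mul_tan (ht : 0 < t) (a : ℝ) :
    MapsTo (fun z => (a : ℂ) + t * tan z) ℍₒ ℍₒ := by
  intro z hz
  have := tan_im_pos hz
  show 0 < ((a : ℂ) + t * tan z).im
  simp only [add_im, ofReal_im, mul_im, ofReal_re, zero_mul, add_zero, zero_add]
  positivity

theorem norm_halfPlaneToDisc_tanMap_le (ht : 0 < t) (hm : 0 < m) (hθ : m ≤ θ.im)
    (hz : m ≤ z.im) (hw : m ≤ w.im) {B : ℝ}
    (hB : 2 * θ.im + 2 * t * (Real.cosh m / Real.sinh m) ≤ B) :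
    ‖halfPlaneToDisc (tanMap t θ w) (tanMap t θ z)‖ ≤
      √(1 - (2 * m / B) ^ 2) * ‖halfPlaneToDisc w z‖ := by
  have hnorm : ‖tanMap t θ z - conj (tanMap t θ w)‖ ≤ B := by
    refine (norm_sub_conj_le (norm_tanMap_sub_le ht.le hm hz)
      (norm_tanMap_sub_le ht.le hm hw)).trans ?_
    rw [abs_of_pos (hm.trans_le hθ)]
    linarith
  rw [tanMap_eq_add_mul_I, tanMap_eq_add_mul_I] at hnorm ⊢
  exact norm_halfPlaneToDisc_add_mul_I_le
    ((differentiableOn_tan_upperHalfPlaneSet.const_mul _).const_add _)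
    (mapsTo_ofReal_add_mul_tan ht _) hm.le hθ (hm.trans_le hz) (hm.trans_le hw) hnorm

lemma tanMap_iterate_bounds (ht : 0 ≤ t) (hm : 0 < m) (hθ : m ≤ θ.im) (n : ℕ) :
    θ.im ≤ ((tanMap t θ)^[n] θ).im ∧
      ‖(tanMap t θ)^[n] θ - θ‖ ≤ t * (Real.cosh m / Real.sinh m) := by
  cases n with
  | zero =>
    have := Real.cosh_pos m
    have := Real.sinh_pos_iff.2 hm
    simp only [Function.iterate_zero, id_eq, le_refl, sub_self, norm_zero, true_and]
    positivity
  | succ n =>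
    have him := (tanMap_iterate_bounds ht hm hθ n).1
    rw [Function.iterate_succ_apply']
    exact ⟨im_le_im_tanMap ht (hm.trans_le (hθ.trans him)),
      norm_tanMap_sub_le ht hm (hθ.trans him)⟩

theorem norm_tanMap_iterate_sub_le (ht : 0 < t) (hm : 0 < m) (hθ : m ≤ θ.im) {ζ : ℂ}
    (hζ : 0 < ζ.im) (hfix : tanMap t θ ζ = ζ) {B : ℝ}
    (hB : 2 * θ.im + 2 * t * (Real.cosh m / Real.sinh m) ≤ B) (n : ℕ) :
    ‖(tanMap t θ)^[n] θ - ζ‖ ≤ B * √(1 - (2 * m / B) ^ 2) ^ n := by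
  set F := tanMap t θ
  set k := √(1 - (2 * m / B) ^ 2)
  have hζm : m ≤ ζ.im := hθ.trans (hfix ▸ im_le_im_tanMap ht.le hζ)
  have horbit := tanMap_iterate_bounds ht.le hm hθ
  have hcontract (n : ℕ) : ‖halfPlaneToDisc ζ (F^[n] θ)‖ ≤ k ^ n := by
    induction n with
    | zero => simpa using (norm_halfPlaneToDisc_lt_one hζ (hm.trans_le hθ)).le
    | succ n ih =>
      rw [Function.iterate_succ_apply', ← hfix, pow_succ']
      exact (norm_halfPlaneToDisc_tanMap_le ht hm hθ (hθ.trans (horbit n).1) hζm hB).trans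
        (mul_le_mul_of_nonneg_left ih (Real.sqrt_nonneg _))
  have hζθ : ‖ζ - θ‖ ≤ t * (Real.cosh m / Real.sinh m) :=
    hfix ▸ norm_tanMap_sub_le ht.le hm hζm
  have hden : ‖F^[n] θ - conj ζ‖ ≤ B := by
    refine (norm_sub_conj_le (horbit n).2 hζθ).trans ?_
    rw [abs_of_pos (hm.trans_le hθ)]
    linarith
  calc ‖F^[n] θ - ζ‖ = ‖halfPlaneToDisc ζ (F^[n] θ)‖ * ‖F^[n] θ - conj ζ‖ := by
        rw [norm_halfPlaneToDisc, div_mul_cancel₀]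
        exact norm_ne_zero_iff.2 (sub_conj_ne_zero (hm.trans_le (hθ.trans (horbit n).1)) hζ)
    _ ≤ k ^ n * B :=
        mul_le_mul (hcontract n) hden (norm_nonneg _) (pow_nonneg (Real.sqrt_nonneg _) _)
    _ = B * k ^ n := mul_comm _ _

theorem tendstoUniformlyOn_tanMap_iterate (ht : 0 < t) (hm : 0 < m) {M : ℝ} (hmM : m ≤ M)
    {ζ : ℂ → ℂ} (hζ : ∀ θ, m ≤ θ.im → 0 < (ζ θ).im ∧ tanMap t θ (ζ θ) = ζ θ) :
    TendstoUniformlyOn (fun n θ => (tanMap t θ)^[n] θ) ζ atTop {θ | m ≤ θ.im ∧ θ.im ≤ M} := by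
  set B := 2 * M + 2 * t * (Real.cosh m / Real.sinh m)
  set k := √(1 - (2 * m / B) ^ 2)
  have hB : 0 < B := by
    have := Real.cosh_pos m
    have := Real.sinh_pos_iff.2 hm
    have := hm.trans_le hmM
    positivity
  have hk : k < 1 := by
    rw [Real.sqrt_lt' one_pos, one_pow, sub_lt_self_iff]
    positivity
  have hlim : Tendsto (fun n => B * k ^ n) atTop (𝓝 0) := by
    simpa using (tendsto_pow_atTop_nhds_zero_of_lt_one (Real.sqrt_nonneg _) hk).const_mul B
  rw [Metric.tendstoUniformlyOn_iff]
  intro ε hε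
  filter_upwards [hlim.eventually (gt_mem_nhds hε)] with n hn θ ⟨hθm, hθM⟩
  rw [dist_comm, dist_eq_norm]
  exact (norm_tanMap_iterate_sub_le ht hm hθm (hζ θ hθm).1 (hζ θ hθm).2
    (by linarith) n).trans_lt hn

end tanMap

lemma setOf_im_mem_Icc_mem_nhds {x : ℂ} {a b : ℝ} (ha : a < x.im) (hb : x.im < b) :
    {θ : ℂ | a ≤ θ.im ∧ θ.im ≤ b} ∈ 𝓝 x :=
  continuous_im.continuousAt.preimage_mem_nhds (Icc_mem_nhds ha hb)

theorem stmt14 (t : ℝ) (ht : 0 < t) (ζt : ℂ → ℂ)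
    (hζt : ∀ θ : ℂ, 0 < θ.im → 0 < (ζt θ).im ∧ ζt θ - t * Complex.tan (ζt θ) = θ) :
    TendstoLocallyUniformlyOn
      (fun (n : ℕ) (θ : ℂ) => (fun x : ℂ => θ + t * Complex.tan x)^[n] θ)
      ζt Filter.atTop {θ : ℂ | 0 < θ.im} := by
  have hfix (θ : ℂ) (hθ : 0 < θ.im) : 0 < (ζt θ).im ∧ tanMap t θ (ζt θ) = ζt θ :=
    ⟨(hζt θ hθ).1, by rw [tanMap]; linear_combination -(hζt θ hθ).2⟩
  refine tendstoLocallyUniformlyOn_of_forall_exists_nhds fun x (hx : 0 < x.im) => ?_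
  refine ⟨{θ | x.im / 2 ≤ θ.im ∧ θ.im ≤ 2 * x.im}, mem_nhdsWithin_of_mem_nhds
    (setOf_im_mem_Icc_mem_nhds (half_lt_self hx) (by linarith)), ?_⟩
  exact tendstoUniformlyOn_tanMap_iterate ht (half_pos hx) (by linarith)
    fun θ hθ => hfix θ ((half_pos hx).trans_le hθ)
end

section
/- Fix t > 0 and θ ∈ ℍ, and consider the entire function F(ζ) = (ζ − θ)·cos ζ − t·sin ζ. Then: (1) F has infinitely many zeros in ℂ; (2) F has exactly one zero ζ₀ in ℍ; (3) this zero is simple, i.e. F'(ζ₀) ≠ 0. In particular, the equation ζ − t·tan ζ = θ has a unique solution in ℍ and infinitely many solutions in ℂ ∖ ℍ. -/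
/-!
Put `w = exp (2 i ζ)`. Then `F ζ = 0` iff `ζ = θ + i t (1 - w) / (1 + w)`, and `ζ ∈ ℍ` iff
`|w| < 1`. So the zeros in `ℍ` correspond to the fixed points in the unit disc of
`Φ w = exp (2 i θ - 2 t (1 - w) / (1 + w))`, which maps the disc holomorphically into the smaller
disc of radius `exp (-2 Im θ)`. By the Schwarz–Pick lemma such a map is a strict contraction for
the pseudo-hyperbolic distance, hence has exactly one fixed point.

At a zero, `cos ζ · F' ζ = cos² ζ - t`, and for `ζ ∈ ℍ` the equation `cos² ζ = t` would force
`Im ζ - Im θ = sinh (2 Im ζ) / 2 ≥ Im ζ`.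

Near `(n + 1/2) π` with `n` large the equation reads `exp (2 i ζ) = -(1 + O(1/n))`; the same
fixed-point theorem, applied to a logarithm of it, gives a zero in each of these disjoint discs,
and all but one of them lie outside `ℍ`.
-/

open Complex ComplexConjugate Metric Set Filter Topology
open scoped Real

noncomputable def diskMobius (a z : ℂ) : ℂ := (a - z) / (1 - conj a * z)

section DiskMobius

variable {a z : ℂ}

lemma one_sub_conj_mul_ne_zero (ha : ‖a‖ < 1) (hz : ‖z‖ < 1) : 1 - conj a * z ≠ 0 := by
  have : ‖conj a * z‖ < 1 := by
    rw [norm_mul, RCLike.norm_conj]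
    nlinarith [norm_nonneg a, norm_nonneg z]
  intro h
  rw [← sub_eq_zero.1 h, norm_one] at this
  exact this.false

lemma norm_diskMobius_lt_one (ha : ‖a‖ < 1) (hz : ‖z‖ < 1) : ‖diskMobius a z‖ < 1 := by
  have hd := one_sub_conj_mul_ne_zero ha hz
  rw [diskMobius, norm_div, div_lt_one (norm_pos_iff.2 hd)]
  refine lt_of_pow_lt_pow_left₀ 2 (norm_nonneg _) ?_
  have ha' : normSq a < 1 := by rw [← Complex.sq_norm]; nlinarith [norm_nonneg a]
  have hz' : normSq z < 1 := by rw [← Complex.sq_norm]; nlinarith [norm_nonneg z]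
  -- `|1 - ā z|² - |a - z|² = (1 - |a|²)(1 - |z|²)`
  simp only [Complex.sq_norm, normSq_apply, sub_re, sub_im, mul_re, mul_im, conj_re, conj_im,
    one_re, one_im] at *
  nlinarith [mul_pos (sub_pos.2 ha') (sub_pos.2 hz')]

@[simp] lemma diskMobius_self (a : ℂ) : diskMobius a a = 0 := by simp [diskMobius]

@[simp] lemma diskMobius_zero_right (a : ℂ) : diskMobius a 0 = a := by simp [diskMobius]

lemma diskMobius_diskMobius (ha : ‖a‖ < 1) (hz : ‖z‖ < 1) :
    diskMobius a (diskMobius a z) = z := by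
  have hd := one_sub_conj_mul_ne_zero ha hz
  have ha' := one_sub_conj_mul_ne_zero ha ha
  have hden : 1 - conj a * diskMobius a z = (1 - conj a * a) / (1 - conj a * z) := by
    rw [diskMobius]; field_simp; ring
  rw [diskMobius, hden, diskMobius, sub_div' hd, div_div_div_cancel_right₀ hd, div_eq_iff ha']
  ring

lemma one_add_ne_zero_of_norm_lt_one {w : ℂ} (hw : ‖w‖ < 1) : 1 + w ≠ 0 := fun h ↦ by
  simp [eq_neg_of_add_eq_zero_right h] at hw

lemma differentiableAt_diskMobius (ha : ‖a‖ < 1) (hz : ‖z‖ < 1) :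
    DifferentiableAt ℂ (diskMobius a) z :=
  ((differentiableAt_const a).sub differentiableAt_id).div
    ((differentiableAt_const 1).sub ((differentiableAt_const _).mul differentiableAt_id))
    (one_sub_conj_mul_ne_zero ha hz)

lemma diskMobius_eq_zero_iff (ha : ‖a‖ < 1) (hz : ‖z‖ < 1) : diskMobius a z = 0 ↔ a = z := by
  rw [diskMobius, div_eq_zero_iff, sub_eq_zero, or_iff_left (one_sub_conj_mul_ne_zero ha hz)]

lemma norm_sub_le_two_mul_norm_diskMobius (ha : ‖a‖ < 1) (hz : ‖z‖ < 1) :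
    ‖a - z‖ ≤ 2 * ‖diskMobius a z‖ := by
  have hd := one_sub_conj_mul_ne_zero ha hz
  have h2 : ‖1 - conj a * z‖ ≤ 2 := by
    calc ‖1 - conj a * z‖ ≤ 1 + ‖a‖ * ‖z‖ := by
          simpa [norm_mul] using norm_sub_le (1 : ℂ) (conj a * z)
      _ ≤ 2 := by nlinarith [norm_nonneg a, norm_nonneg z]
  calc ‖a - z‖ = ‖diskMobius a z‖ * ‖1 - conj a * z‖ := by
        rw [diskMobius, norm_div, div_mul_cancel₀ _ (norm_ne_zero_iff.2 hd)]
    _ ≤ 2 * ‖diskMobius a z‖ := by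
        rw [mul_comm]; exact mul_le_mul_of_nonneg_right h2 (norm_nonneg _)

end DiskMobius

lemma norm_diskMobius_le_of_mapsTo_ball {f : ℂ → ℂ} (hd : DifferentiableOn ℂ f (ball 0 1))
    (hf : MapsTo f (ball 0 1) (ball 0 1)) {z w : ℂ} (hz : ‖z‖ < 1) (hw : ‖w‖ < 1) :
    ‖diskMobius (f w) (f z)‖ ≤ ‖diskMobius w z‖ := by
  have hf' : ∀ {x : ℂ}, ‖x‖ < 1 → ‖f x‖ < 1 := fun hx ↦
    mem_ball_zero_iff.1 (hf (mem_ball_zero_iff.2 hx))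
  -- Schwarz's lemma for `diskMobius (f w) ∘ f ∘ diskMobius w`, which fixes `0`.
  let g : ℂ → ℂ := fun x ↦ diskMobius (f w) (f (diskMobius w x))
  have hgd : DifferentiableOn ℂ g (ball 0 1) := fun x hx ↦ by
    have hx := mem_ball_zero_iff.1 hx
    have hm := norm_diskMobius_lt_one hw hx
    exact ((differentiableAt_diskMobius (hf' hw) (hf' hm)).comp x
      ((hd.differentiableAt (isOpen_ball.mem_nhds (mem_ball_zero_iff.2 hm))).comp x
        (differentiableAt_diskMobius hw hx))).differentiableWithinAt
  have hgm : MapsTo g (ball 0 1) (closedBall 0 1) := fun x hx ↦ by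
    have hx := mem_ball_zero_iff.1 hx
    exact mem_closedBall_zero_iff.2
      (norm_diskMobius_lt_one (hf' hw) (hf' (norm_diskMobius_lt_one hw hx))).le
  have hg0 : g 0 = 0 := by simp [g]
  simpa [g, diskMobius_diskMobius hw hz] using
    Complex.norm_le_norm_of_mapsTo_ball hgd hgm hg0 (norm_diskMobius_lt_one hw hz)

lemma one_add_mul_norm_one_sub_le {s : ℝ} (hs₀ : 0 ≤ s) (hs₁ : s ≤ 1) {ξ : ℂ} (hξ : ‖ξ‖ ≤ 1) :
    (1 + s) * ‖1 - ξ‖ ≤ 2 * ‖1 - s * ξ‖ := by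
  refine le_of_pow_le_pow_left₀ two_ne_zero (by positivity) ?_
  have hm : ξ.re * ξ.re + ξ.im * ξ.im ≤ 1 := by
    rw [← normSq_apply, ← Complex.sq_norm]; nlinarith [norm_nonneg ξ]
  have hx : -1 ≤ ξ.re := by linarith [(abs_le.1 ((abs_re_le_norm ξ).trans hξ)).1]
  rw [mul_pow, mul_pow, Complex.sq_norm, Complex.sq_norm, normSq_apply, normSq_apply]
  simp only [sub_re, sub_im, one_re, one_im, mul_re, mul_im, ofReal_re, ofReal_im]
  -- the difference of the two sides is `(1 - s) ((1 - |ξ|²)(1 + 3s) + 2 (1 - s)(1 + Re ξ))`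
  nlinarith [mul_nonneg (mul_nonneg (sub_nonneg.2 hs₁) (sub_nonneg.2 hm))
      (by positivity : 0 ≤ 1 + 3 * s),
    mul_nonneg (mul_nonneg (sub_nonneg.2 hs₁) (sub_nonneg.2 hs₁)) (by linarith : 0 ≤ 1 + ξ.re)]

lemma norm_diskMobius_ofReal_mul_le {ρ : ℝ} (hρ₀ : 0 ≤ ρ) (hρ₁ : ρ ≤ 1) {z w : ℂ}
    (hz : ‖z‖ < 1) (hw : ‖w‖ < 1) :
    ‖diskMobius (ρ * w) (ρ * z)‖ ≤ 2 * ρ / (1 + ρ ^ 2) * ‖diskMobius w z‖ := by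
  have hξ : ‖conj w * z‖ ≤ 1 := by
    rw [norm_mul, RCLike.norm_conj]; nlinarith [norm_nonneg w, norm_nonneg z]
  have hρξ : conj (ρ * w : ℂ) * (ρ * z) = (ρ ^ 2 : ℝ) * (conj w * z) := by
    simp only [map_mul, conj_ofReal]; push_cast; ring
  have hd := norm_pos_iff.2 (one_sub_conj_mul_ne_zero hw hz)
  have hd' : 0 < ‖1 - (ρ ^ 2 : ℝ) * (conj w * z)‖ := by
    rw [← hρξ]; refine norm_pos_iff.2 (one_sub_conj_mul_ne_zero ?_ ?_) <;>
      simpa [norm_mul, abs_of_nonneg hρ₀] using by nlinarith [norm_nonneg w, norm_nonneg z]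
  have key := one_add_mul_norm_one_sub_le (sq_nonneg ρ) (pow_le_one₀ hρ₀ hρ₁) hξ
  rw [diskMobius, diskMobius, hρξ, ← mul_sub, norm_div, norm_div, norm_mul, norm_real,
    Real.norm_of_nonneg hρ₀, mul_div_assoc', div_le_div_iff₀ hd' hd, div_mul_eq_mul_div,
    div_mul_eq_mul_div, le_div_iff₀ (by positivity)]
  nlinarith [mul_le_mul_of_nonneg_left key (by positivity : 0 ≤ ρ * ‖w - z‖)]

section FixedPoint

variable {f : ℂ → ℂ} {ρ : ℝ}

lemma norm_diskMobius_le_mul_of_mapsTo_ball (hd : DifferentiableOn ℂ f (ball 0 1))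
    (hρ : ρ ≤ 1) (hf : MapsTo f (ball 0 1) (ball 0 ρ)) {z w : ℂ} (hz : ‖z‖ < 1) (hw : ‖w‖ < 1) :
    ‖diskMobius (f w) (f z)‖ ≤ 2 * ρ / (1 + ρ ^ 2) * ‖diskMobius w z‖ := by
  have hρ₀ : 0 < ρ := pos_of_mem_ball (hf (mem_ball_self one_pos))
  have hg : MapsTo (fun x ↦ (ρ : ℂ)⁻¹ * f x) (ball 0 1) (ball 0 1) := fun x hx ↦ by
    have := mem_ball_zero_iff.1 (hf hx)
    rw [mem_ball_zero_iff, norm_mul, norm_inv, norm_real, Real.norm_of_nonneg hρ₀.le]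
    rwa [inv_mul_lt_one₀ hρ₀]
  have hfg : ∀ x, f x = ρ * ((ρ : ℂ)⁻¹ * f x) := fun x ↦ by
    rw [mul_inv_cancel_left₀ (ofReal_ne_zero.2 hρ₀.ne')]
  rw [hfg w, hfg z]
  calc _ ≤ 2 * ρ / (1 + ρ ^ 2) * ‖diskMobius ((ρ : ℂ)⁻¹ * f w) ((ρ : ℂ)⁻¹ * f z)‖ :=
        norm_diskMobius_ofReal_mul_le hρ₀.le hρ (mem_ball_zero_iff.1 (hg (mem_ball_zero_iff.2 hz)))
          (mem_ball_zero_iff.1 (hg (mem_ball_zero_iff.2 hw)))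
    _ ≤ 2 * ρ / (1 + ρ ^ 2) * ‖diskMobius w z‖ := by
        gcongr
        exact norm_diskMobius_le_of_mapsTo_ball (hd.const_mul _) hg hz hw

/-- A one-dimensional Earle–Hamilton theorem. -/
theorem existsUnique_fixedPt_of_mapsTo_ball (hd : DifferentiableOn ℂ f (ball 0 1)) (hρ : ρ < 1)
    (hf : MapsTo f (ball 0 1) (ball 0 ρ)) : ∃! z ∈ ball (0 : ℂ) 1, f z = z := by
  have hρ₀ : 0 < ρ := pos_of_mem_ball (hf (mem_ball_self one_pos))
  have hfρ : ∀ {x : ℂ}, ‖x‖ < 1 → ‖f x‖ < ρ := fun hx ↦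
    mem_ball_zero_iff.1 (hf (mem_ball_zero_iff.2 hx))
  set k := 2 * ρ / (1 + ρ ^ 2)
  have hk₁ : k < 1 := by rw [div_lt_one (by positivity)]; nlinarith
  set a : ℕ → ℂ := fun n ↦ f^[n] 0
  have ha_succ : ∀ n, a (n + 1) = f (a n) := fun n ↦ Function.iterate_succ_apply' f n 0
  have ha : ∀ n, ‖a n‖ < 1 := fun n ↦ by
    induction n with
    | zero => simp [a]
    | succ n ih => exact ha_succ n ▸ (hfρ ih).trans hρ
  have hstep : ∀ n, ‖diskMobius (a n) (a (n + 1))‖ ≤ k ^ n := fun n ↦ by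
    induction n with
    | zero => simpa [a, diskMobius] using (ha 1).le
    | succ n ih =>
      rw [ha_succ n, ha_succ (n + 1), pow_succ']
      exact (norm_diskMobius_le_mul_of_mapsTo_ball hd hρ.le hf (ha (n + 1)) (ha n)).trans
        (by gcongr)
  have hcauchy : CauchySeq a := cauchySeq_of_le_geometric k 2 hk₁ fun n ↦ by
    rw [dist_eq_norm]
    linarith [norm_sub_le_two_mul_norm_diskMobius (ha n) (ha (n + 1)), hstep n]
  obtain ⟨l, hl⟩ := cauchySeq_tendsto_of_complete hcauchy
  have hl_succ : Tendsto (fun n ↦ a (n + 1)) atTop (𝓝 l) := (tendsto_add_atTop_iff_nat 1).2 hl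
  have hl1 : ‖l‖ < 1 := lt_of_le_of_lt
    (le_of_tendsto' hl_succ.norm fun n ↦ ha_succ n ▸ (hfρ (ha n)).le) hρ
  have hfl : f l = l := by
    have := (hd.differentiableAt (isOpen_ball.mem_nhds (mem_ball_zero_iff.2 hl1)))
      |>.continuousAt.tendsto.comp hl
    exact tendsto_nhds_unique (this.congr fun n ↦ (ha_succ n).symm) hl_succ
  refine ⟨l, ⟨mem_ball_zero_iff.2 hl1, hfl⟩, fun z ⟨hz, hfz⟩ ↦ ?_⟩
  have hz := mem_ball_zero_iff.1 hz
  have h := norm_diskMobius_le_mul_of_mapsTo_ball hd hρ.le hf hz hl1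
  rw [hfz, hfl] at h
  have : ‖diskMobius l z‖ = 0 := by nlinarith [norm_nonneg (diskMobius l z)]
  exact ((diskMobius_eq_zero_iff hl1 hz).1 (norm_eq_zero.1 this)).symm

end FixedPoint

namespace TanEquation

noncomputable def F (t : ℝ) (θ ζ : ℂ) : ℂ := (ζ - θ) * cos ζ - t * sin ζ

/- With `w = exp (2 * I * ζ)` one has `tan ζ = I * (1 - w) / (1 + w)`, so on the zeros of `F`
in the upper half-plane `fromDisc t θ` inverts `ζ ↦ exp (2 * I * ζ)`. -/
noncomputable def fromDisc (t : ℝ) (θ w : ℂ) : ℂ := θ + I * t * ((1 - w) / (1 + w))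

variable {t : ℝ} {θ ζ w : ℂ}

lemma F_eq_zero_iff :
    F t θ ζ = 0 ↔ (t - I * (ζ - θ)) * exp (2 * I * ζ) = t + I * (ζ - θ) := by
  have h₁ : exp (ζ * I) * exp (-ζ * I) = 1 := by rw [← exp_add]; simp
  have h₂ : exp (2 * I * ζ) = exp (ζ * I) * exp (ζ * I) := by rw [← exp_add]; ring_nf
  have key : (t - I * (ζ - θ)) * exp (2 * I * ζ) - (t + I * (ζ - θ))
      = -2 * I * exp (ζ * I) * F t θ ζ := by
    rw [F, cos, sin]
    linear_combination (t - I * (ζ - θ)) * h₂ + (t + I * (ζ - θ)) * h₁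
      + (t * exp (ζ * I) ^ 2 - t * exp (ζ * I) * exp (-ζ * I)) * I_sq
  rw [← sub_eq_zero (a := _ * exp _), key]
  simp [exp_ne_zero, I_ne_zero]

lemma norm_exp_two_mul_I_mul (ζ : ℂ) : ‖exp (2 * I * ζ)‖ = Real.exp (-2 * ζ.im) := by
  rw [norm_exp]; simp

lemma re_one_sub_div_one_add (w : ℂ) :
    ((1 - w) / (1 + w)).re = (1 - normSq w) / normSq (1 + w) := by
  rw [div_re, ← add_div]
  congr 1
  simp [normSq_apply]; ring

lemma im_fromDisc : (fromDisc t θ w).im = θ.im + t * ((1 - w) / (1 + w)).re := by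
  simp [fromDisc, mul_assoc]

lemma im_lt_im_fromDisc (ht : 0 < t) (hw : ‖w‖ < 1) : θ.im < (fromDisc t θ w).im := by
  have hw' : normSq w < 1 := by rw [← Complex.sq_norm]; nlinarith [norm_nonneg w]
  rw [im_fromDisc, re_one_sub_div_one_add, lt_add_iff_pos_right]
  exact mul_pos ht (div_pos (by linarith) (normSq_pos.2 (one_add_ne_zero_of_norm_lt_one hw)))

lemma F_eq_zero_iff_eq_fromDisc (h : 1 + exp (2 * I * ζ) ≠ 0) :
    F t θ ζ = 0 ↔ ζ = fromDisc t θ (exp (2 * I * ζ)) := by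
  set e := exp (2 * I * ζ)
  have : ζ = fromDisc t θ e ↔ (ζ - θ) * (1 + e) = I * t * (1 - e) := by
    rw [fromDisc, ← sub_eq_iff_eq_add', mul_div_assoc', eq_div_iff h]
  rw [this, F_eq_zero_iff]
  constructor <;> intro h'
  · linear_combination I * h' + (ζ - θ) * (1 + e) * I_sq
  · linear_combination (-I) * h' + t * (e - 1) * I_sq

lemma norm_exp_two_mul_I_mul_lt_one (hζ : 0 < ζ.im) : ‖exp (2 * I * ζ)‖ < 1 := by
  rw [norm_exp_two_mul_I_mul, Real.exp_lt_one_iff]; linarith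

lemma one_add_exp_ne_zero (hζ : 0 < ζ.im) : 1 + exp (2 * I * ζ) ≠ 0 :=
  one_add_ne_zero_of_norm_lt_one (norm_exp_two_mul_I_mul_lt_one hζ)

theorem existsUnique_F_eq_zero (ht : 0 < t) (hθ : 0 < θ.im) :
    ∃! ζ, 0 < ζ.im ∧ F t θ ζ = 0 := by
  set Φ : ℂ → ℂ := fun w ↦ exp (2 * I * fromDisc t θ w)
  have hd : DifferentiableOn ℂ Φ (ball 0 1) := fun w hw ↦ by
    have h1w := one_add_ne_zero_of_norm_lt_one (mem_ball_zero_iff.1 hw)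
    refine DifferentiableAt.differentiableWithinAt ?_
    unfold Φ fromDisc
    fun_prop (disch := exact h1w)
  have hΦ : MapsTo Φ (ball 0 1) (ball 0 (Real.exp (-2 * θ.im))) := fun w hw ↦ by
    rw [mem_ball_zero_iff, norm_exp_two_mul_I_mul, Real.exp_lt_exp]
    linarith [im_lt_im_fromDisc (θ := θ) ht (mem_ball_zero_iff.1 hw)]
  obtain ⟨w, ⟨hw, hfix⟩, huniq⟩ :=
    existsUnique_fixedPt_of_mapsTo_ball hd (Real.exp_lt_one_iff.2 (by linarith)) hΦ
  have him : 0 < (fromDisc t θ w).im := hθ.trans (im_lt_im_fromDisc ht (mem_ball_zero_iff.1 hw))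
  refine ⟨fromDisc t θ w, ⟨him, ?_⟩, fun ζ ⟨hζ, hF⟩ ↦ ?_⟩
  · rw [F_eq_zero_iff_eq_fromDisc (one_add_exp_ne_zero him)]
    exact congrArg (fromDisc t θ) hfix.symm
  · rw [F_eq_zero_iff_eq_fromDisc (one_add_exp_ne_zero hζ)] at hF
    rw [hF, huniq (exp (2 * I * ζ)) ⟨?_, ?_⟩]
    · exact mem_ball_zero_iff.2 (norm_exp_two_mul_I_mul_lt_one hζ)
    · exact congrArg (fun z ↦ exp (2 * I * z)) hF.symm

lemma hasDerivAt_F : HasDerivAt (F t θ) ((1 - t) * cos ζ - (ζ - θ) * sin ζ) ζ := by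
  refine ((((hasDerivAt_id ζ).sub_const θ).mul (hasDerivAt_cos ζ)).sub
    ((hasDerivAt_sin ζ).const_mul (t : ℂ))).congr_deriv ?_
  simp only [id]; ring

lemma cos_mul_deriv_F (hF : F t θ ζ = 0) : cos ζ * deriv (F t θ) ζ = cos ζ ^ 2 - t := by
  rw [hasDerivAt_F.deriv]
  unfold F at hF
  linear_combination (-sin ζ) * hF - t * sin_sq_add_cos_sq ζ

lemma four_mul_exp_mul_cos_sq (ζ : ℂ) :
    4 * exp (2 * I * ζ) * cos ζ ^ 2 = (1 + exp (2 * I * ζ)) ^ 2 := by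
  have h₁ : exp (ζ * I) * exp (-ζ * I) = 1 := by rw [← exp_add]; simp
  have h₂ : exp (2 * I * ζ) = exp (ζ * I) * exp (ζ * I) := by rw [← exp_add]; ring_nf
  rw [cos, h₂]
  linear_combination (2 * exp (ζ * I) ^ 2 + exp (ζ * I) * exp (-ζ * I) + 1) * h₁

lemma cos_sq_ne_of_F_eq_zero (ht : 0 < t) (hθ : 0 < θ.im) (hζ : 0 < ζ.im) (hF : F t θ ζ = 0) :
    cos ζ ^ 2 ≠ t := by
  intro hcos
  set w := exp (2 * I * ζ)
  set A := Real.exp (-2 * ζ.im)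
  have hA : ‖w‖ = A := norm_exp_two_mul_I_mul ζ
  have hA₀ : 0 < A := Real.exp_pos _
  have hN : normSq (1 + w) = 4 * t * A := by
    have := congrArg norm (four_mul_exp_mul_cos_sq ζ)
    rw [hcos, norm_mul, norm_mul, norm_pow, hA, norm_real, Real.norm_of_nonneg ht.le] at this
    rw [← Complex.sq_norm, ← this]; norm_num; ring
  have him := congrArg im ((F_eq_zero_iff_eq_fromDisc (one_add_exp_ne_zero hζ)).1 hF)
  rw [im_fromDisc, re_one_sub_div_one_add, ← Complex.sq_norm w, hA, hN] at him
  field_simp at him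
  -- `(1 - A²) / (4 A) = sinh (2 Im ζ) / 2 ≥ Im ζ`
  have hsinh : 4 * ζ.im * A ≤ 1 - A ^ 2 := by
    have h := Real.self_le_sinh_iff.2 (by linarith : 0 ≤ 2 * ζ.im)
    have hA' : A * Real.exp (2 * ζ.im) = 1 := by rw [← Real.exp_add]; simp
    rw [Real.sinh_eq, show -(2 * ζ.im) = -2 * ζ.im by ring] at h
    nlinarith [mul_le_mul_of_nonneg_left h (by positivity : 0 ≤ 2 * A)]
  nlinarith [mul_pos hθ hA₀]

theorem deriv_F_ne_zero (ht : 0 < t) (hθ : 0 < θ.im) (hζ : 0 < ζ.im) (hF : F t θ ζ = 0) :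
    deriv (F t θ) ζ ≠ 0 := fun h ↦
  cos_sq_ne_of_F_eq_zero ht hθ hζ hF (sub_eq_zero.1 <| by rw [← cos_mul_deriv_F hF, h, mul_zero])

lemma F_eq_zero_of_exp_eq (hd : I * (ζ - θ) - t ≠ 0)
    (h : exp (2 * I * ζ) = -(1 + 2 * t / (I * (ζ - θ) - t))) : F t θ ζ = 0 := by
  rw [F_eq_zero_iff, h]
  field_simp
  ring

lemma four_mul_le_norm_I_mul_sub_sub {n : ℕ} (hn : 1 + ‖θ‖ + 5 * t ≤ n)
    (hζ : ζ ∈ ball ((((n : ℝ) + 1 / 2) * π : ℝ) : ℂ) 1) : 4 * t ≤ ‖I * (ζ - θ) - t‖ := by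
  have hc : ‖((((n : ℝ) + 1 / 2) * π : ℝ) : ℂ)‖ = (n + 1 / 2) * π := by
    rw [norm_real, Real.norm_of_nonneg (by positivity)]
  have hπ : (n + 1 / 2) * 3 ≤ (n + 1 / 2) * π := by gcongr; exact Real.pi_gt_three.le
  have h₁ := norm_sub_norm_le ((((n : ℝ) + 1 / 2) * π : ℝ) : ℂ) ζ
  have h₂ := norm_sub_norm_le ζ θ
  have h₃ := norm_sub_norm_le (I * (ζ - θ)) t
  rw [mem_ball, dist_eq_norm, norm_sub_rev] at hζ
  rw [norm_mul, norm_I, one_mul, norm_real, Real.norm_eq_abs] at h₃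
  rcases le_or_gt t 0 with ht | ht
  · linarith [norm_nonneg (I * (ζ - θ) - t)]
  · rw [abs_of_pos ht] at h₃
    linarith

lemma exp_two_mul_I_mul_half_odd (n : ℕ) :
    exp (2 * I * ((((n : ℝ) + 1 / 2) * π : ℝ) : ℂ)) = -1 := by
  have : 2 * I * ((((n : ℝ) + 1 / 2) * π : ℝ) : ℂ) = π * I + n * (2 * π * I) := by
    push_cast; ring
  rw [this, exp_add, exp_pi_mul_I, exp_nat_mul_two_pi_mul_I, mul_one]

lemma exists_F_eq_zero_mem_ball (ht : 0 < t) {n : ℕ} (hn : 1 + ‖θ‖ + 5 * t ≤ n) :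
    ∃ ζ ∈ ball ((((n : ℝ) + 1 / 2) * π : ℝ) : ℂ) 1, F t θ ζ = 0 := by
  set c : ℂ := ((((n : ℝ) + 1 / 2) * π : ℝ) : ℂ)
  have hcw : ∀ w ∈ ball (0 : ℂ) 1, c + w ∈ ball c 1 := fun w hw ↦ by
    rwa [mem_ball, dist_self_add_left, ← mem_ball_zero_iff]
  have hbound : ∀ w ∈ ball (0 : ℂ) 1, 4 * t ≤ ‖I * (c + w - θ) - t‖ := fun w hw ↦
    four_mul_le_norm_I_mul_sub_sub hn (hcw w hw)
  set u : ℂ → ℂ := fun w ↦ 2 * t / (I * (c + w - θ) - t)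
  have hd : ∀ w ∈ ball (0 : ℂ) 1, I * (c + w - θ) - t ≠ 0 := fun w hw h ↦ by
    have := hbound w hw; rw [h, norm_zero] at this; linarith
  have hu : ∀ w ∈ ball (0 : ℂ) 1, ‖u w‖ ≤ 1 / 2 := fun w hw ↦ by
    have := hbound w hw
    rw [norm_div, div_le_iff₀ (by linarith), norm_mul, norm_real, Real.norm_of_nonneg ht.le]
    norm_num; linarith
  -- `c + w` is a zero iff `exp (2 I w) = 1 + u w`, so take a logarithm
  set g : ℂ → ℂ := fun w ↦ log (1 + u w) / (2 * I)
  have hslit : ∀ w ∈ ball (0 : ℂ) 1, 1 + u w ∈ slitPlane := fun w hw ↦ by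
    refine mem_slitPlane_iff.2 (Or.inl ?_)
    have := (abs_le.1 ((abs_re_le_norm (u w)).trans (hu w hw))).1
    rw [add_re, one_re]; linarith
  have hgd : DifferentiableOn ℂ g (ball 0 1) := fun w hw ↦ by
    have hud : DifferentiableAt ℂ u w := by
      unfold u; fun_prop (disch := exact hd w hw)
    exact (((differentiableAt_const 1).add hud).clog (hslit w hw)).div_const _
      |>.differentiableWithinAt
  have hg : MapsTo g (ball 0 1) (ball 0 (1 / 2)) := fun w hw ↦ by
    rw [mem_ball_zero_iff, norm_div, norm_mul, norm_I, mul_one, RCLike.norm_ofNat]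
    have := norm_log_one_add_half_le_self (hu w hw)
    linarith [hu w hw]
  obtain ⟨w, ⟨hw, hfix⟩, -⟩ := existsUnique_fixedPt_of_mapsTo_ball hgd (by norm_num) hg
  refine ⟨c + w, hcw w hw, F_eq_zero_of_exp_eq (hd w hw) ?_⟩
  have hlog : 2 * I * w = log (1 + u w) := by
    rw [mul_comm]; exact ((div_eq_iff (by simp [I_ne_zero])).1 hfix).symm
  rw [mul_add, exp_add, exp_two_mul_I_mul_half_odd, hlog,
    exp_log (slitPlane_ne_zero (hslit w hw))]
  simp [u, add_sub_right_comm]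

theorem setOf_F_eq_zero_infinite (ht : 0 < t) : {ζ | F t θ ζ = 0}.Infinite := by
  refine Set.Infinite.of_image re (Set.infinite_of_forall_exists_gt fun R ↦ ?_)
  obtain ⟨n, hn⟩ := exists_nat_ge (max (1 + ‖θ‖ + 5 * t) (R + 1))
  obtain ⟨ζ, hζ, hF⟩ := exists_F_eq_zero_mem_ball ht ((le_max_left _ _).trans hn)
  refine ⟨ζ.re, mem_image_of_mem re hF, ?_⟩
  have hre := (abs_lt.1 ((abs_re_le_norm _).trans_lt (mem_ball_iff_norm.1 hζ))).1
  rw [sub_re, ofReal_re] at hre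
  have : (n : ℝ) + 1 / 2 ≤ (n + 1 / 2) * π := le_mul_of_one_le_right (by positivity)
    (by linarith [Real.pi_gt_three])
  linarith [le_max_right (1 + ‖θ‖ + 5 * t) (R + 1)]

end TanEquation

theorem stmt15 (t : ℝ) (ht : 0 < t) (θ : ℂ) (hθ : 0 < θ.im) :
    {ζ : ℂ | (ζ - θ) * Complex.cos ζ - t * Complex.sin ζ = 0}.Infinite ∧
    {ζ : ℂ | ((ζ - θ) * Complex.cos ζ - t * Complex.sin ζ = 0) ∧ ζ.im ≤ 0}.Infinite ∧
    (∃! ζ₀ : ℂ, 0 < ζ₀.im ∧ (ζ₀ - θ) * Complex.cos ζ₀ - t * Complex.sin ζ₀ = 0) ∧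
    (∀ ζ₀ : ℂ, 0 < ζ₀.im → (ζ₀ - θ) * Complex.cos ζ₀ - t * Complex.sin ζ₀ = 0 →
      deriv (fun ζ : ℂ => (ζ - θ) * Complex.cos ζ - t * Complex.sin ζ) ζ₀ ≠ 0) := by
  have hinf : {ζ | TanEquation.F t θ ζ = 0}.Infinite :=
    TanEquation.setOf_F_eq_zero_infinite ht
  obtain ⟨ζ₀, hζ₀, huniq⟩ := TanEquation.existsUnique_F_eq_zero ht hθ
  refine ⟨hinf, (hinf.sdiff (finite_singleton ζ₀)).mono ?_, ⟨ζ₀, hζ₀, huniq⟩,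
    fun ζ hζ hF ↦ TanEquation.deriv_F_ne_zero ht hθ hζ hF⟩
  rintro ζ ⟨hF, hne⟩
  exact ⟨hF, not_lt.1 fun hζ ↦ hne (huniq ζ ⟨hζ, hF⟩)⟩
end
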